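/- Let $\Lambda$ be a finite dimensional Auslander algebra and $M$ a nonzero finitely generated right $\Lambda$-module. Then $\mathrm{pd}_\Lambda(M) = 2$ if and only if $\mathrm{pd}_\Lambda(\mathrm{soc}\,M) = 2$. -/

import Mathlib

universe u

open CategoryTheory

section Defs

variable (R : Type u) [Ring R]

/-- `pdLE R n M` : the module `M` has projective dimension at most `n`. -/
def pdLE : ℕ → ModuleCat.{u} R → Prop
  | 0, M => Module.Projective R M
  | (n+1), M => ∃ (P : ModuleCat.{u} R) (f : P →ₗ[R] M),
      Module.Projective R P ∧ Function.Surjective f ∧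
      pdLE n (ModuleCat.of R (LinearMap.ker f))

/-- The projective dimension of a module, as an element of `ℕ∞` (`⊤` if no
finite projective resolution exists). -/
noncomputable def projDim (M : ModuleCat.{u} R) : ℕ∞ :=
  sInf ((↑) '' {n : ℕ | pdLE R n M})

/-- `idLE R n M` : the module `M` has injective dimension at most `n`. -/
def idLE : ℕ → ModuleCat.{u} R → Prop
  | 0, M => Module.Injective R M
  | (n+1), M => ∃ (I : ModuleCat.{u} R) (f : M →ₗ[R] I),
      Module.Injective R I ∧ Function.Injective f ∧
      idLE n (ModuleCat.of R (I ⧸ LinearMap.range f))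

/-- The injective dimension of a module, as an element of `ℕ∞`. -/
noncomputable def injDim (M : ModuleCat.{u} R) : ℕ∞ :=
  sInf ((↑) '' {n : ℕ | idLE R n M})

/-- The global dimension (computed on finitely generated modules) is at most `n`. -/
def gldimLE (n : ℕ) : Prop :=
  ∀ M : ModuleCat.{u} R, Module.Finite R M → pdLE R n M

/-- The global dimension of `R`, computed on finitely generated modules. -/
noncomputable def globalDim : ℕ∞ :=
  sInf ((↑) '' {n : ℕ | gldimLE R n})

/-- The socle of a module: the sum of all its simple submodules. -/
def socle (M : Type u) [AddCommGroup M] [Module R M] : Submodule R M :=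
  sSup {S : Submodule R M | IsSimpleModule R S}

/-- An algebra is an Auslander algebra if its global dimension is at most `2` and
its dominant dimension is at least `2`, i.e. there is an exact sequence
`0 → R → I₀ → I₁` with `I₀`, `I₁` both projective and injective. -/
def IsAuslander : Prop :=
  gldimLE R 2 ∧
  ∃ (I₀ I₁ : ModuleCat.{u} R) (f : R →ₗ[R] I₀) (g : I₀ →ₗ[R] I₁),
    Module.Injective R I₀ ∧ Module.Projective R I₀ ∧
    Module.Injective R I₁ ∧ Module.Projective R I₁ ∧
    Function.Injective f ∧ LinearMap.ker g = LinearMap.range f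

/-- `f : M →ₗ[R] I` realizes `I` as an injective envelope of `M`: `I` is injective
and `f` is an essential embedding. -/
def IsInjectiveEnvelope {M I : Type u} [AddCommGroup M] [Module R M]
    [AddCommGroup I] [Module R I] (f : M →ₗ[R] I) : Prop :=
  Module.Injective R I ∧ Function.Injective f ∧
    ∀ N : Submodule R I, N ≠ ⊥ → N ⊓ LinearMap.range f ≠ ⊥

end Defs


/-!
Both projective dimensions are at most `2`, so the claim is that `pd M ≤ 1` iff
`pd (soc M) ≤ 1`. Over a ring of global dimension at most `2`, a finitely generated submodule
of a projective module is a second syzygy and so has projective dimension at most `1`; this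
makes `pd ≤ 1` pass to submodules, which is one direction. Conversely, dominant dimension at
least `2` forces every simple module of projective dimension at most `1` to embed into the
projective-injective `I₀`. Since `M` is Artinian, embeddings of its simple submodules (all of
which lie in `soc M`) assemble into an embedding of `M` into a finite power of `I₀`, which is
projective, so `pd M ≤ 1`.
-/

section Homological

variable {Λ : Type u} [Ring Λ]
  {A B K X N : Type u} [AddCommGroup A] [Module Λ A] [AddCommGroup B] [Module Λ B]
  [AddCommGroup K] [Module Λ K] [AddCommGroup X] [Module Λ X] [AddCommGroup N] [Module Λ N]

theorem nonempty_linearEquiv_prod_of_exact [Module.Projective Λ B] {i : K →ₗ[Λ] X}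
    {p : X →ₗ[Λ] B} (h : Function.Exact i p) (hi : Function.Injective i)
    (hp : Function.Surjective p) : Nonempty (X ≃ₗ[Λ] K × B) :=
  let ⟨s, hs⟩ := p.exists_rightInverse_of_surjective (LinearMap.range_eq_top.2 hp)
  ⟨(h.splitSurjectiveEquiv hi ⟨s, hs⟩).1⟩

theorem Module.Projective.of_exact [Module.Projective Λ K] [Module.Projective Λ B]
    {i : K →ₗ[Λ] X} {p : X →ₗ[Λ] B} (h : Function.Exact i p) (hi : Function.Injective i)
    (hp : Function.Surjective p) : Module.Projective Λ X :=
  let ⟨e⟩ := nonempty_linearEquiv_prod_of_exact h hi hp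
  .of_equiv e.symm

theorem Module.Projective.of_prod_left [Module.Projective Λ (A × B)] : Module.Projective Λ A :=
  .of_split (LinearMap.inl Λ A B) (LinearMap.fst Λ A B) rfl

theorem schanuel [Module.Projective Λ A] [Module.Projective Λ B] {f : A →ₗ[Λ] N}
    {g : B →ₗ[Λ] N} (hf : Function.Surjective f) (hg : Function.Surjective g) :
    Nonempty ((LinearMap.ker f × B) ≃ₗ[Λ] (LinearMap.ker g × A)) := by
  -- both sides are the pullback `{(a, b) | f a = g b}`, split along its two projections
  set X := LinearMap.ker (f ∘ₗ LinearMap.fst Λ A B - g ∘ₗ LinearMap.snd Λ A B)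
  have mem_X {a : A} {b : B} : (a, b) ∈ X ↔ f a = g b := by simp [X, sub_eq_zero]
  let i₁ : LinearMap.ker f →ₗ[Λ] X :=
    (LinearMap.inl Λ A B ∘ₗ (LinearMap.ker f).subtype).codRestrict X fun a => by
      simp [mem_X]
  let i₂ : LinearMap.ker g →ₗ[Λ] X :=
    (LinearMap.inr Λ A B ∘ₗ (LinearMap.ker g).subtype).codRestrict X fun b => by
      simp [mem_X]
  have exact₁ : Function.Exact i₁ (LinearMap.snd Λ A B ∘ₗ X.subtype) := by
    rintro ⟨⟨a, b⟩, hab⟩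
    simp only [mem_X] at hab
    constructor
    · rintro (rfl : b = 0)
      exact ⟨⟨a, by simpa using hab⟩, rfl⟩
    · rintro ⟨_, h⟩
      exact congrArg (fun x : X => (x : A × B).2) h.symm
  have exact₂ : Function.Exact i₂ (LinearMap.fst Λ A B ∘ₗ X.subtype) := by
    rintro ⟨⟨a, b⟩, hab⟩
    simp only [mem_X] at hab
    constructor
    · rintro (rfl : a = 0)
      exact ⟨⟨b, by simpa using hab.symm⟩, rfl⟩
    · rintro ⟨_, h⟩
      exact congrArg (fun x : X => (x : A × B).1) h.symm
  have hi₁ : Function.Injective i₁ := fun a a' h =>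
    Subtype.ext (congrArg (fun x : X => (x : A × B).1) h)
  have hi₂ : Function.Injective i₂ := fun b b' h =>
    Subtype.ext (congrArg (fun x : X => (x : A × B).2) h)
  have hp₁ : Function.Surjective (LinearMap.snd Λ A B ∘ₗ X.subtype) := fun b =>
    let ⟨a, ha⟩ := hf (g b)
    ⟨⟨(a, b), mem_X.2 ha⟩, rfl⟩
  have hp₂ : Function.Surjective (LinearMap.fst Λ A B ∘ₗ X.subtype) := fun a =>
    let ⟨b, hb⟩ := hg (f a)
    ⟨⟨(a, b), mem_X.2 hb.symm⟩, rfl⟩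
  obtain ⟨e₁⟩ := nonempty_linearEquiv_prod_of_exact exact₁ hi₁ hp₁
  obtain ⟨e₂⟩ := nonempty_linearEquiv_prod_of_exact exact₂ hi₂ hp₂
  exact ⟨e₁.symm.trans e₂⟩

theorem Module.Projective.ker_comp {F Q : Type u} [AddCommGroup F] [Module Λ F]
    [AddCommGroup Q] [Module Λ Q] {q : F →ₗ[Λ] Q} (w : Q →ₗ[Λ] N) (hq : Function.Surjective q)
    [Module.Projective Λ (LinearMap.ker q)] [Module.Projective Λ (LinearMap.ker w)] :
    Module.Projective Λ (LinearMap.ker (w ∘ₗ q)) := by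
  let p : LinearMap.ker (w ∘ₗ q) →ₗ[Λ] LinearMap.ker w :=
    (q ∘ₗ Submodule.subtype _).codRestrict _ fun x => x.2
  refine .of_exact (i := Submodule.inclusion (LinearMap.ker_le_ker_comp q w)) (p := p)
    ?_ (Submodule.inclusion_injective _) ?_
  · rintro ⟨x, hx⟩
    refine ⟨fun h => ⟨⟨x, congrArg Subtype.val h⟩, rfl⟩, ?_⟩
    rintro ⟨y, hy⟩
    simp only [← hy]
    exact Subtype.ext y.2
  · rintro ⟨y, hy⟩
    obtain ⟨x, rfl⟩ := hq y
    exact ⟨⟨x, hy⟩, rfl⟩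

end Homological

/-- Unbundled form of `pdLE Λ 1`, see `pdLE_one_iff`. -/
def HasProjDimLEOne (Λ : Type u) [Ring Λ] (N : Type u) [AddCommGroup N] [Module Λ N] : Prop :=
  ∃ (P : Type u) (_ : AddCommGroup P) (_ : Module Λ P) (f : P →ₗ[Λ] N),
    Module.Projective Λ P ∧ Function.Surjective f ∧ Module.Projective Λ (LinearMap.ker f)

section ProjDimLEOne

variable {Λ : Type u} [Ring Λ] {N N' F Q : Type u} [AddCommGroup N] [Module Λ N]
  [AddCommGroup N'] [Module Λ N'] [AddCommGroup F] [Module Λ F] [AddCommGroup Q] [Module Λ Q]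

theorem pdLE_one_iff : pdLE Λ 1 (ModuleCat.of Λ N) ↔ HasProjDimLEOne Λ N :=
  ⟨fun ⟨P, f, hP, hf, hk⟩ => ⟨P, _, _, f, hP, hf, hk⟩,
    fun ⟨P, _, _, f, hP, hf, hk⟩ => ⟨ModuleCat.of Λ P, f, hP, hf, hk⟩⟩

noncomputable def LinearMap.kerProdMapIdEquiv (f : F →ₗ[Λ] N) :
    LinearMap.ker (f.prodMap (LinearMap.id : Q →ₗ[Λ] Q)) ≃ₗ[Λ] LinearMap.ker f :=
  (LinearEquiv.ofEq _ _ (by rw [LinearMap.ker_prodMap, LinearMap.ker_id,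
      ← Submodule.map_inl])).trans
    (Submodule.equivMapOfInjective _ LinearMap.inl_injective _).symm

namespace HasProjDimLEOne

theorem of_linearEquiv (e : N ≃ₗ[Λ] N') (h : HasProjDimLEOne Λ N) : HasProjDimLEOne Λ N' := by
  obtain ⟨P, _, _, f, hP, hf, hk⟩ := h
  refine ⟨P, _, _, e ∘ₗ f, hP, e.surjective.comp hf, ?_⟩
  rwa [LinearMap.ker_comp_of_ker_eq_bot _ (LinearMap.ker_eq_bot_of_injective e.injective)]

/-- By Schanuel's lemma, one projective presentation with projective kernel forces all. -/
theorem projective_ker (h : HasProjDimLEOne Λ N) [Module.Projective Λ F] {q : F →ₗ[Λ] N}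
    (hq : Function.Surjective q) : Module.Projective Λ (LinearMap.ker q) := by
  obtain ⟨P, _, _, f, hP, hf, hk⟩ := h
  obtain ⟨e⟩ := schanuel hf hq
  have : Module.Projective Λ (LinearMap.ker q × P) := .of_equiv e
  exact .of_prod_left (B := P)

theorem prod (h : HasProjDimLEOne Λ N) [Module.Projective Λ Q] : HasProjDimLEOne Λ (N × Q) := by
  obtain ⟨P, _, _, f, hP, hf, hk⟩ := h
  exact ⟨P × Q, _, _, f.prodMap LinearMap.id, inferInstance,
    hf.prodMap Function.surjective_id, .of_equiv f.kerProdMapIdEquiv.symm⟩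

theorem of_prod (h : HasProjDimLEOne Λ (N × Q)) [Module.Projective Λ Q] :
    HasProjDimLEOne Λ N := by
  let f := Finsupp.linearCombination Λ (id : N → N)
  have hf : Function.Surjective f := Finsupp.linearCombination_id_surjective Λ N
  have := h.projective_ker (q := f.prodMap (LinearMap.id : Q →ₗ[Λ] Q))
    (hf.prodMap Function.surjective_id)
  exact ⟨_, _, _, f, inferInstance, hf, .of_equiv (f.kerProdMapIdEquiv (Q := Q))⟩

theorem ker_of_pdLE_two (h : pdLE Λ 2 (ModuleCat.of Λ N)) [Module.Projective Λ F]
    {q : F →ₗ[Λ] N} (hq : Function.Surjective q) : HasProjDimLEOne Λ (LinearMap.ker q) := by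
  obtain ⟨P, f, hP, hf, hk⟩ := h
  obtain ⟨e⟩ := schanuel hf hq
  exact ((pdLE_one_iff.1 hk).prod (Q := F)).of_linearEquiv e |>.of_prod (Q := P)

theorem of_surjective (h : HasProjDimLEOne Λ F) {p : F →ₗ[Λ] N} (hp : Function.Surjective p)
    [Module.Projective Λ (LinearMap.ker p)] : HasProjDimLEOne Λ N := by
  obtain ⟨P, _, _, q, hP, hq, hk⟩ := h
  exact ⟨P, _, _, p ∘ₗ q, hP, hp.comp hq, Module.Projective.ker_comp p hq⟩

end HasProjDimLEOne

end ProjDimLEOne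

section Embedding

variable {Λ : Type u} [Ring Λ] {N P : Type u} [AddCommGroup N] [Module Λ N]
  [AddCommGroup P] [Module Λ P]

/-- The image of `N` in `P →₀ Λ` is supported on finitely many coordinates. -/
theorem exists_injective_fin_of_injective_projective [Module.Finite Λ N]
    [Module.Projective Λ P] {i : N →ₗ[Λ] P} (hi : Function.Injective i) :
    ∃ (m : ℕ) (ψ : N →ₗ[Λ] (Fin m → Λ)), Function.Injective ψ := by
  classical
  obtain ⟨s, hs⟩ := Module.projective_def.1 ‹Module.Projective Λ P›
  let g := s ∘ₗ i
  obtain ⟨t, ht⟩ := Module.Finite.fg_top (R := Λ) (M := N)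
  let T : Finset P := t.biUnion fun x => (g x).support
  have hgT : ∀ y, g y ∈ Finsupp.supported Λ Λ (T : Set P) := by
    have : (⊤ : Submodule Λ N) ≤ (Finsupp.supported Λ Λ (T : Set P)).comap g := by
      rw [← ht, Submodule.span_le]
      intro x hx
      exact (Finsupp.mem_supported Λ (g x)).2 (Finset.coe_subset.2 (Finset.subset_biUnion_of_mem
        (fun x => (g x).support) hx))
    exact fun y => this Submodule.mem_top
  let e := (Finsupp.supportedEquivFinsupp (M := Λ) (R := Λ) (T : Set P)).trans
    ((Finsupp.linearEquivFunOnFinite Λ Λ (T : Set P)).trans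
      (LinearEquiv.funCongrLeft Λ Λ T.equivFin.symm))
  exact ⟨T.card, e ∘ₗ g.codRestrict _ hgT,
    e.injective.comp fun x y h => hs.injective.comp hi (congrArg Subtype.val h)⟩

theorem HasProjDimLEOne.of_injective_projective (hgl : gldimLE Λ 2) [Module.Finite Λ N]
    [Module.Projective Λ P] {i : N →ₗ[Λ] P} (hi : Function.Injective i) :
    HasProjDimLEOne Λ N := by
  obtain ⟨m, ψ, hψ⟩ := exists_injective_fin_of_injective_projective hi
  let Q := LinearMap.range ψ
  have hQ := HasProjDimLEOne.ker_of_pdLE_two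
    (hgl (ModuleCat.of Λ ((Fin m → Λ) ⧸ Q)) (Module.Finite.quotient Λ Q)) Q.mkQ_surjective
  rw [Submodule.ker_mkQ] at hQ
  exact hQ.of_linearEquiv (LinearEquiv.ofInjective ψ hψ).symm

theorem HasProjDimLEOne.submodule (hgl : gldimLE Λ 2) [IsNoetherianRing Λ]
    {M : Type u} [AddCommGroup M] [Module Λ M] [Module.Finite Λ M] (hM : HasProjDimLEOne Λ M)
    (N : Submodule Λ M) : HasProjDimLEOne Λ N := by
  obtain ⟨n, p, hp⟩ := Module.Finite.exists_fin' Λ M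
  have := hM.projective_ker hp
  let Q := N.comap p
  have hQ : HasProjDimLEOne Λ Q := .of_injective_projective hgl Q.injective_subtype
  let p' : Q →ₗ[Λ] N := p.restrict fun _ hx => hx
  have hp' : Function.Surjective p' := fun ⟨y, hy⟩ =>
    let ⟨x, hx⟩ := hp y
    ⟨⟨x, show p x ∈ N from hx ▸ hy⟩, Subtype.ext hx⟩
  have : Module.Projective Λ (LinearMap.ker p') := by
    rw [LinearMap.ker_restrict]
    have hle : LinearMap.ker p ≤ Q := fun x hx => show p x ∈ N by simp [LinearMap.mem_ker.1 hx]
    exact .of_equiv (Submodule.comapSubtypeEquivOfLe hle).symm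
  exact hQ.of_surjective hp'

end Embedding

section SimpleModules

variable {Λ : Type u} [Ring Λ] {A I₀ I₁ S X : Type u} [AddCommGroup A] [Module Λ A]
  [AddCommGroup I₀] [Module Λ I₀] [AddCommGroup I₁] [Module Λ I₁]
  [AddCommGroup S] [Module Λ S] [AddCommGroup X] [Module Λ X]

theorem LinearMap.eq_zero_of_projective [Module.Projective Λ A]
    (hS : ∀ φ : S →ₗ[Λ] Λ, φ = 0) (φ : S →ₗ[Λ] A) : φ = 0 := by
  obtain ⟨s, hs⟩ := Module.projective_def.1 ‹Module.Projective Λ A›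
  ext x
  have : s (φ x) = 0 := Finsupp.ext fun a =>
    LinearMap.congr_fun (hS (Finsupp.lapply a ∘ₗ s ∘ₗ φ)) x
  simpa [this] using (hs (φ x)).symm

/-- The vanishing of `Ext¹(X ⧸ K, A)`, read off the injective copresentation
`0 → A → I₀ → I₁`. -/
theorem exists_comp_subtype_eq_of_exact [Module.Injective Λ I₀] {ι : A →ₗ[Λ] I₀}
    (hι : Function.Injective ι) {g : I₀ →ₗ[Λ] I₁} (hg : LinearMap.ker g = LinearMap.range ι)
    {K : Submodule Λ X} (hK : ∀ φ : (X ⧸ K) →ₗ[Λ] I₁, φ = 0) (φ : K →ₗ[Λ] A) :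
    ∃ ψ : X →ₗ[Λ] A, ψ ∘ₗ K.subtype = φ := by
  obtain ⟨H, hH⟩ := Module.Injective.extension_property Λ I₀ K X K.subtype K.injective_subtype
    (ι ∘ₗ φ)
  have hle : K ≤ LinearMap.ker (g ∘ₗ H) := fun x hx => by
    have : H x = ι (φ ⟨x, hx⟩) := LinearMap.congr_fun hH ⟨x, hx⟩
    rw [LinearMap.mem_ker, LinearMap.comp_apply, this, ← LinearMap.mem_ker, hg]
    exact LinearMap.mem_range_self ι _
  have hgH : g ∘ₗ H = 0 := by
    rw [← K.liftQ_mkQ _ hle, hK (K.liftQ _ hle), LinearMap.zero_comp]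
  have hH_range (x : X) : H x ∈ LinearMap.range ι := by
    rw [← hg, LinearMap.mem_ker, ← LinearMap.comp_apply, hgH, LinearMap.zero_apply]
  refine ⟨(LinearEquiv.ofInjective ι hι).symm ∘ₗ H.codRestrict _ hH_range, ?_⟩
  ext x
  apply hι
  simpa using LinearMap.congr_fun hH x

theorem exists_retraction_of_forall_exists_comp_subtype_eq {K : Submodule Λ X}
    [Module.Finite Λ K] [Module.Projective Λ K]
    (hext : ∀ φ : K →ₗ[Λ] Λ, ∃ ψ : X →ₗ[Λ] Λ, ψ ∘ₗ K.subtype = φ) :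
    ∃ r : X →ₗ[Λ] K, ∀ x : K, r x = x := by
  obtain ⟨n, π, σ, -, -, hπσ⟩ := Module.Finite.exists_comp_eq_id_of_projective Λ K
  choose ψ hψ using fun i : Fin n => hext (LinearMap.proj i ∘ₗ σ)
  refine ⟨π ∘ₗ LinearMap.pi ψ, fun x => ?_⟩
  have : LinearMap.pi ψ x = σ x := funext fun i => LinearMap.congr_fun (hψ i) x
  rw [LinearMap.comp_apply, this]
  exact LinearMap.congr_fun hπσ x

/-- The heart of the argument: if a simple module `S` of projective dimension at most one had
no nonzero map to `I₀`, then it would have none to `Λ` and to `I₁`, so the presentation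
`0 → K → Λ → S → 0` would split, making `S` a submodule of `Λ`. -/
theorem exists_injective_of_isSimpleModule [IsNoetherianRing Λ] [Module.Injective Λ I₀]
    [Module.Projective Λ I₁] {ι : Λ →ₗ[Λ] I₀} (hι : Function.Injective ι) {g : I₀ →ₗ[Λ] I₁}
    (hg : LinearMap.ker g = LinearMap.range ι) [IsSimpleModule Λ S]
    (hS : HasProjDimLEOne Λ S) : ∃ ψ : S →ₗ[Λ] I₀, Function.Injective ψ := by
  by_contra! hno
  have to_I₀ (φ : S →ₗ[Λ] I₀) : φ = 0 := φ.injective_or_eq_zero.resolve_left (hno φ)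
  have to_Λ (φ : S →ₗ[Λ] Λ) : φ = 0 := by
    ext x
    exact hι (by simpa using LinearMap.congr_fun (to_I₀ (ι ∘ₗ φ)) x)
  have := IsSimpleModule.nontrivial Λ S
  obtain ⟨x₀, hx₀⟩ := exists_ne (0 : S)
  let p := LinearMap.toSpanSingleton Λ S x₀
  have hp : Function.Surjective p := IsSimpleModule.toSpanSingleton_surjective Λ hx₀
  let e : (Λ ⧸ LinearMap.ker p) ≃ₗ[Λ] S := p.quotKerEquivOfSurjective hp
  have := hS.projective_ker hp
  have to_I₁ (φ : (Λ ⧸ LinearMap.ker p) →ₗ[Λ] I₁) : φ = 0 := by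
    have : φ ∘ₗ e.symm.toLinearMap = 0 := LinearMap.eq_zero_of_projective to_Λ _
    rw [← LinearMap.comp_id φ, ← e.symm_comp, ← LinearMap.comp_assoc, this,
      LinearMap.zero_comp]
  obtain ⟨r, hr⟩ := exists_retraction_of_forall_exists_comp_subtype_eq
    (exists_comp_subtype_eq_of_exact hι hg to_I₁)
  let e' : S ≃ₗ[Λ] LinearMap.ker r :=
    e.symm.trans (Submodule.quotientEquivOfIsCompl _ _ (LinearMap.isCompl_of_proj hr))
  let j : S →ₗ[Λ] Λ := (LinearMap.ker r).subtype ∘ₗ e'.toLinearMap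
  have hj : Function.Injective j := (LinearMap.ker r).injective_subtype.comp e'.injective
  exact hx₀ (hj (by simp [to_Λ j]))

end SimpleModules

section Auslander

variable {Λ : Type u} [Ring Λ] {E M : Type u} [AddCommGroup E] [Module Λ E]
  [AddCommGroup M] [Module Λ M]

/-- Among the kernels of maps `M → Eʳ` take a minimal one; a simple submodule inside it would
embed into `E`, and extending that embedding to `M` would shrink the kernel. -/
theorem exists_injective_pi_of_forall_isSimpleModule [Module.Injective Λ E] [IsArtinian Λ M]
    (h : ∀ S : Submodule Λ M, IsSimpleModule Λ S → ∃ ψ : S →ₗ[Λ] E, Function.Injective ψ) :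
    ∃ (r : ℕ) (φ : M →ₗ[Λ] (Fin r → E)), Function.Injective φ := by
  obtain ⟨_, ⟨r, φ, rfl⟩, hmin⟩ := IsArtinian.set_has_minimal
    {K | ∃ (r : ℕ) (φ : M →ₗ[Λ] (Fin r → E)), LinearMap.ker φ = K} ⟨⊤, 0, 0, LinearMap.ker_zero⟩
  refine ⟨r, φ, LinearMap.ker_eq_bot.1 ?_⟩
  by_contra hne
  obtain ⟨S, hS, hSφ⟩ := (eq_bot_or_exists_atom_le (LinearMap.ker φ)).resolve_left hne
  obtain ⟨ψ, hψ⟩ := h S (isSimpleModule_iff_isAtom.2 hS)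
  obtain ⟨χ, hχ⟩ :=
    Module.Injective.extension_property Λ E S M S.subtype S.injective_subtype ψ
  refine hmin _ ⟨r + 1, χ.vecCons φ, rfl⟩ (lt_of_le_of_ne (fun x hx => ?_) fun heq => ?_)
  · simp_all [LinearMap.mem_ker]
  · obtain ⟨x, hxS, hx⟩ := (Submodule.ne_bot_iff S).1 hS.1
    have hxker : χ.vecCons φ x = 0 := LinearMap.mem_ker.1 (heq ▸ hSφ hxS)
    have hψx : ψ ⟨x, hxS⟩ = 0 := by
      rw [← hχ]
      simpa using congrFun hxker 0
    exact hx (congrArg Subtype.val (hψ (hψx.trans (map_zero ψ).symm)))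

theorem HasProjDimLEOne.of_socle (hΛ : IsAuslander Λ) [IsArtinianRing Λ] [Module.Finite Λ M]
    (h : HasProjDimLEOne Λ (socle Λ M)) : HasProjDimLEOne Λ M := by
  obtain ⟨hgl, I₀, I₁, ι, g, _, hI₀, _, _, hι, hg⟩ := hΛ
  have hsimple (S : Submodule Λ M) (hS : IsSimpleModule Λ S) :
      ∃ ψ : S →ₗ[Λ] I₀, Function.Injective ψ :=
    exists_injective_of_isSimpleModule hι hg <|
      (h.submodule hgl (S.comap (socle Λ M).subtype)).of_linearEquiv
        (Submodule.comapSubtypeEquivOfLe (le_sSup hS))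
  obtain ⟨r, φ, hφ⟩ := exists_injective_pi_of_forall_isSimpleModule hsimple
  have : Module.Projective Λ (Fin r → I₀) := .of_equiv (DFinsupp.linearEquivFunOnFintype (R := Λ))
  exact .of_injective_projective hgl hφ

end Auslander

section ProjDim

variable {Λ : Type u} [Ring Λ]

theorem pdLE_succ {n : ℕ} {X : ModuleCat.{u} Λ} (h : pdLE Λ n X) : pdLE Λ (n + 1) X := by
  induction n generalizing X with
  | zero =>
    refine ⟨X, LinearMap.id, h, Function.surjective_id, ?_⟩
    rw [pdLE, LinearMap.ker_id]
    infer_instance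
  | succ n ih =>
    obtain ⟨P, f, hP, hf, hk⟩ := h
    exact ⟨P, f, hP, hf, ih hk⟩

theorem projDim_eq_two_iff {X : ModuleCat.{u} Λ} (h : pdLE Λ 2 X) :
    projDim Λ X = 2 ↔ ¬ pdLE Λ 1 X := by
  refine ⟨fun h2 h1 => ?_, fun h1 => le_antisymm (sInf_le ⟨2, h, rfl⟩) (le_sInf ?_)⟩
  · have : projDim Λ X ≤ 1 := sInf_le ⟨1, h1, rfl⟩
    simp [h2] at this
  · rintro _ ⟨n, hn, rfl⟩
    match n, hn with
    | 0, hn => exact absurd (pdLE_succ hn) h1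
    | 1, hn => exact absurd hn h1
    | n + 2, _ => exact_mod_cast Nat.le_add_left 2 n

end ProjDim

theorem stmt_10_general (k Λ : Type u) [Field k] [Ring Λ] [Algebra k Λ] [FiniteDimensional k Λ]
    (hΛ : IsAuslander Λ)
    (M : Type u) [AddCommGroup M] [Module Λ M] [Module.Finite Λ M] :
    projDim Λ (ModuleCat.of Λ M) = 2 ↔ projDim Λ (ModuleCat.of Λ ↥(socle Λ M)) = 2 := by
  have : IsArtinianRing Λ := IsArtinianRing.of_finite k Λ
  rw [projDim_eq_two_iff (hΛ.1 _ inferInstance), projDim_eq_two_iff (hΛ.1 _ inferInstance),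
    pdLE_one_iff, pdLE_one_iff]
  exact not_congr ⟨fun h => h.submodule hΛ.1 _, .of_socle hΛ⟩

/-- Over a finite dimensional Auslander algebra, a nonzero finitely generated module has
projective dimension exactly `2` iff its socle does. -/
theorem stmt_10 (k Λ : Type u) [Field k] [Ring Λ] [Algebra k Λ] [FiniteDimensional k Λ]
    (hΛ : IsAuslander Λ)
    (M : Type u) [AddCommGroup M] [Module Λ M] [Module.Finite Λ M] [Nontrivial M] :
    projDim Λ (ModuleCat.of Λ M) = 2 ↔ projDim Λ (ModuleCat.of Λ ↥(socle Λ M)) = 2 :=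
  stmt_10_general k Λ hΛ M
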